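/- arXiv:2604.21877 — 4 statements merged into one kernel-verified Lean document; each statement's English description precedes it below -/
import Mathlib

section
/- If w_i ≤ C for all i ∈ [n], then OPT_I ≤ OPT_F ≤ 2·OPT_I, where OPT_I = min{K(x) : x ∈ {0,1}^n, c⊤x ≤ B} and OPT_F = min{F(x) : x ∈ {0,1}^n, c⊤x ≤ B}. -/
/-!
Both optima range over the same `x`, so it suffices to compare `K x` and `F x` for each `x`,
and `K x ≤ F x` because integral solutions are fractional ones. Conversely, let `A` be the items
left available by `x`, take a feasible `S ⊆ A` of maximal cardinality among those closed upwards
in profit density `p / w`, and let `k` be a densest item of `A \ S`. Lagrangian relaxation with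
multiplier `λ = p k / w k` bounds every fractional solution by
`p(S) + λ (C - w(S)) ≤ p(S) + p k`, and both `S` and `{k}` are feasible (the latter because
`w k ≤ C`), so `F x ≤ 2 K x`.
-/

open Finset

namespace Knapsack

variable {ι : Type*} {p w y : ι → ℝ} {A S : Finset ι} {C K l : ℝ}

/-- `S` is closed upwards in density `p / w` within `A`. Densities are compared by
cross-multiplication, so items of weight zero are allowed. -/
def DensityClosed (p w : ι → ℝ) (A S : Finset ι) : Prop :=
  ∀ i ∈ S, ∀ j ∈ A, p i * w j < p j * w i → j ∈ S

theorem DensityClosed.insert [DecidableEq ι] {k : ι} (hS : DensityClosed p w A S)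
    (hk : ∀ j ∈ A, p k * w j < p j * w k → j ∈ S) : DensityClosed p w A (insert k S) := by
  intro i hi j hj hij
  rcases mem_insert.1 hi with rfl | hi
  · exact mem_insert_of_mem (hk j hj hij)
  · exact mem_insert_of_mem (hS i hi j hj hij)

theorem sum_mul_le_lagrangian (hy0 : ∀ i ∈ A, 0 ≤ y i) (hy1 : ∀ i ∈ A, y i ≤ 1)
    (hyw : ∑ i ∈ A, w i * y i ≤ C) (hl : 0 ≤ l) (hSA : S ⊆ A)
    (hup : ∀ i ∈ A, l * w i < p i → i ∈ S) (hdown : ∀ i ∈ S, l * w i ≤ p i) :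
    ∑ i ∈ A, p i * y i ≤ ∑ i ∈ S, p i + l * (C - ∑ i ∈ S, w i) := by
  classical
  have hterm : ∀ i ∈ A, (p i - l * w i) * y i ≤ if i ∈ S then p i - l * w i else 0 := by
    intro i hi
    split_ifs with hiS
    · exact mul_le_of_le_one_right (sub_nonneg.2 (hdown i hiS)) (hy1 i hi)
    · exact mul_nonpos_of_nonpos_of_nonneg
        (sub_nonpos.2 (not_lt.1 (mt (hup i hi) hiS))) (hy0 i hi)
  calc ∑ i ∈ A, p i * y i = ∑ i ∈ A, (p i - l * w i) * y i + l * ∑ i ∈ A, w i * y i := by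
        rw [mul_sum, ← sum_add_distrib]
        exact sum_congr rfl fun i _ => by ring
    _ ≤ ∑ i ∈ A, (if i ∈ S then p i - l * w i else 0) + l * C :=
        add_le_add (sum_le_sum hterm) (mul_le_mul_of_nonneg_left hyw hl)
    _ = ∑ i ∈ S, p i + l * (C - ∑ i ∈ S, w i) := by
        rw [sum_ite_mem, inter_eq_right.2 hSA, sum_sub_distrib, ← mul_sum]
        ring

theorem exists_densityClosed_maximal [DecidableEq ι] (hC : 0 ≤ C) :
    ∃ S ⊆ A, DensityClosed p w A S ∧ ∑ i ∈ S, w i ≤ C ∧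
      ∀ k ∈ A \ S, DensityClosed p w A (insert k S) → C < ∑ i ∈ S, w i + w k := by
  classical
  obtain ⟨S, hS, hSmax⟩ :=
    (A.powerset.filter fun T => DensityClosed p w A T ∧ ∑ i ∈ T, w i ≤ C).exists_max_image card
      ⟨∅, mem_filter.2 ⟨empty_mem_powerset A, fun i hi => absurd hi (notMem_empty i),
        by simpa using hC⟩⟩
  simp only [mem_filter, mem_powerset] at hS hSmax
  obtain ⟨hSA, hSclosed, hSC⟩ := hS
  refine ⟨S, hSA, hSclosed, hSC, fun k hk hclosed => ?_⟩
  rw [mem_sdiff] at hk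
  by_contra! hle
  have hcard := hSmax (insert k S)
    ⟨insert_subset hk.1 hSA, hclosed, by rwa [sum_insert hk.2, add_comm]⟩
  rw [card_insert_of_notMem hk.2] at hcard
  omega

theorem exists_densityClosed_densest_outside [DecidableEq ι] (hp : ∀ i ∈ A, 0 ≤ p i)
    (hw : ∀ i ∈ A, 0 ≤ w i) (hC : 0 ≤ C) :
    ∃ S ⊆ A, DensityClosed p w A S ∧ ∑ i ∈ S, w i ≤ C ∧
      (S = A ∨ ∃ k ∈ A \ S, 0 < w k ∧ C < ∑ i ∈ S, w i + w k ∧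
        ∀ j ∈ A, p k * w j < p j * w k → j ∈ S) := by
  obtain ⟨S, hSA, hSclosed, hSC, hoverflow⟩ := exists_densityClosed_maximal (p := p) hC
  refine ⟨S, hSA, hSclosed, hSC, ?_⟩
  rcases (A \ S).eq_empty_or_nonempty with hAS | hAS
  · exact .inl (hSA.antisymm (sdiff_eq_empty_iff_subset.1 hAS))
  -- An item of weight zero outside `S` could be added to `S`.
  have hwpos : ∀ k ∈ A \ S, 0 < w k := by
    intro k hk
    refine (hw k (mem_sdiff.1 hk).1).lt_of_ne' fun h0 => ?_
    refine absurd (hoverflow k hk (hSclosed.insert fun j hj hkj => ?_)) (by linarith)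
    rw [h0, mul_zero] at hkj
    exact absurd hkj (not_lt.2 (mul_nonneg (hp k (mem_sdiff.1 hk).1) (hw j hj)))
  obtain ⟨k, hk, hkmax⟩ := (A \ S).exists_max_image (fun i => p i / w i) hAS
  have hdenser : ∀ j ∈ A, p k * w j < p j * w k → j ∈ S := by
    intro j hj hkj
    by_contra hjS
    have hj' : j ∈ A \ S := mem_sdiff.2 ⟨hj, hjS⟩
    have := (div_le_div_iff₀ (hwpos j hj') (hwpos k hk)).1 (hkmax j hj')
    linarith
  exact .inr ⟨k, hk, hwpos k hk, hoverflow k hk (hSclosed.insert hdenser), hdenser⟩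

theorem sum_mul_le_two_mul (hp : ∀ i ∈ A, 0 ≤ p i) (hw : ∀ i ∈ A, 0 ≤ w i)
    (hwC : ∀ i ∈ A, w i ≤ C) (hC : 0 ≤ C)
    (hK : ∀ S ⊆ A, ∑ i ∈ S, w i ≤ C → ∑ i ∈ S, p i ≤ K)
    (hy0 : ∀ i ∈ A, 0 ≤ y i) (hy1 : ∀ i ∈ A, y i ≤ 1) (hyw : ∑ i ∈ A, w i * y i ≤ C) :
    ∑ i ∈ A, p i * y i ≤ 2 * K := by
  classical
  have hK0 : 0 ≤ K := by simpa using hK ∅ (empty_subset A) (by simpa using hC)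
  obtain ⟨S, hSA, hSclosed, hSC, rfl | ⟨k, hk, hwk, hoverflow, hdenser⟩⟩ :=
    exists_densityClosed_densest_outside hp hw hC
  · calc ∑ i ∈ S, p i * y i ≤ ∑ i ∈ S, p i :=
          sum_le_sum fun i hi => mul_le_of_le_one_right (hp i hi) (hy1 i hi)
      _ ≤ 2 * K := by linarith [hK S subset_rfl hSC]
  have hkA := (mem_sdiff.1 hk).1
  have hup : ∀ i ∈ A, p k / w k * w i < p i → i ∈ S := fun i hi h =>
    hdenser i hi (by rwa [div_mul_eq_mul_div, div_lt_iff₀ hwk] at h)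
  have hdown : ∀ i ∈ S, p k / w k * w i ≤ p i := fun i hi => by
    by_contra! h
    rw [div_mul_eq_mul_div, lt_div_iff₀ hwk] at h
    exact (mem_sdiff.1 hk).2 (hSclosed i hi k hkA h)
  have hpk : p k ≤ K := by
    simpa using hK {k} (singleton_subset_iff.2 hkA) (by simpa using hwC k hkA)
  calc ∑ i ∈ A, p i * y i ≤ ∑ i ∈ S, p i + p k / w k * (C - ∑ i ∈ S, w i) :=
        sum_mul_le_lagrangian hy0 hy1 hyw (div_nonneg (hp k hkA) hwk.le) hSA hup hdown
    _ ≤ ∑ i ∈ S, p i + p k / w k * w k := by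
        gcongr
        · exact div_nonneg (hp k hkA) hwk.le
        · linarith
    _ = ∑ i ∈ S, p i + p k := by rw [div_mul_cancel₀ _ hwk.ne']
    _ ≤ 2 * K := by linarith [hK S hSA hSC]

variable [Fintype ι] {x : ι → ℝ}

theorem sum_le_of_mem_upperBounds {V : ℝ}
    (hV : V ∈ upperBounds {v : ℝ | ∃ y : ι → ℝ,
        (∀ i, y i = 0 ∨ y i = 1) ∧ (∑ i, w i * y i ≤ C) ∧
        (∀ i, y i ≤ 1 - x i) ∧ v = ∑ i, p i * y i})
    (hx : ∀ i, x i = 0 ∨ x i = 1) (hS : ∀ i ∈ S, x i = 0) (hSw : ∑ i ∈ S, w i ≤ C) :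
    ∑ i ∈ S, p i ≤ V := by
  classical
  refine hV ⟨fun i => if i ∈ S then 1 else 0, fun i => by by_cases hi : i ∈ S <;> simp [hi],
    by simpa [mul_ite] using hSw, fun i => ?_, by simp [mul_ite]⟩
  by_cases hi : i ∈ S
  · simp [hi, hS i hi]
  · rcases hx i with h | h <;> simp [hi, h]

theorem le_two_mul_of_mem_of_mem_upperBounds {U V : ℝ}
    (hp : ∀ i, 0 ≤ p i) (hw : ∀ i, 0 ≤ w i) (hwC : ∀ i, w i ≤ C) (hC : 0 ≤ C)
    (hx : ∀ i, x i = 0 ∨ x i = 1)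
    (hV : V ∈ upperBounds {v : ℝ | ∃ y : ι → ℝ,
        (∀ i, y i = 0 ∨ y i = 1) ∧ (∑ i, w i * y i ≤ C) ∧
        (∀ i, y i ≤ 1 - x i) ∧ v = ∑ i, p i * y i})
    (hU : U ∈ {v : ℝ | ∃ y : ι → ℝ,
        (∀ i, 0 ≤ y i ∧ y i ≤ 1) ∧ (∑ i, w i * y i ≤ C) ∧
        (∀ i, y i ≤ 1 - x i) ∧ v = ∑ i, p i * y i}) :
    U ≤ 2 * V := by
  classical
  obtain ⟨y, hy, hyw, hyx, rfl⟩ := hU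
  set A := univ.filter fun i => x i = 0
  have hyA : ∀ i ∉ A, y i = 0 := fun i hi => by
    have hxi : x i = 1 := (hx i).resolve_left fun h => hi (by simp [A, h])
    linarith [hyx i, (hy i).1]
  have hsum : ∀ f : ι → ℝ, ∑ i ∈ A, f i * y i = ∑ i, f i * y i := fun f =>
    sum_subset (subset_univ A) fun i _ hi => by rw [hyA i hi, mul_zero]
  rw [← hsum]
  exact sum_mul_le_two_mul (fun i _ => hp i) (fun i _ => hw i) (fun i _ => hwC i) hC
    (fun S hSA hSw => sum_le_of_mem_upperBounds hV hx (fun i hi => (mem_filter.1 (hSA hi)).2) hSw)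
    (fun i _ => (hy i).1) (fun i _ => (hy i).2) (by rwa [hsum])

end Knapsack

theorem stmt4_general (n : ℕ) (C B : ℝ) (hC : 0 ≤ C)
    (p w c : Fin n → ℝ) (hp : ∀ i, 0 ≤ p i) (hw : ∀ i, 0 ≤ w i)
    (hwC : ∀ i, w i ≤ C)
    (K F : (Fin n → ℝ) → ℝ)
    (hK : ∀ x, (∀ i, x i = 0 ∨ x i = 1) →
      IsGreatest {v : ℝ | ∃ y : Fin n → ℝ,
        (∀ i, y i = 0 ∨ y i = 1) ∧ (∑ i, w i * y i ≤ C) ∧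
        (∀ i, y i ≤ 1 - x i) ∧ v = ∑ i, p i * y i} (K x))
    (hF : ∀ x, (∀ i, x i = 0 ∨ x i = 1) →
      IsGreatest {v : ℝ | ∃ y : Fin n → ℝ,
        (∀ i, 0 ≤ y i ∧ y i ≤ 1) ∧ (∑ i, w i * y i ≤ C) ∧
        (∀ i, y i ≤ 1 - x i) ∧ v = ∑ i, p i * y i} (F x))
    (OPTI OPTF : ℝ)
    (hI : IsLeast {v : ℝ | ∃ x : Fin n → ℝ,
        (∀ i, x i = 0 ∨ x i = 1) ∧ (∑ i, c i * x i ≤ B) ∧ v = K x} OPTI)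
    (hFo : IsLeast {v : ℝ | ∃ x : Fin n → ℝ,
        (∀ i, x i = 0 ∨ x i = 1) ∧ (∑ i, c i * x i ≤ B) ∧ v = F x} OPTF) :
    OPTI ≤ OPTF ∧ OPTF ≤ 2 * OPTI := by
  have hKF : ∀ x, (∀ i, x i = 0 ∨ x i = 1) → K x ≤ F x := by
    intro x hx
    obtain ⟨y, hy, hrest⟩ := (hK x hx).1
    exact (hF x hx).2 ⟨y, fun i => by rcases hy i with h | h <;> simp [h], hrest⟩
  constructor
  · obtain ⟨x, hx, hcx, rfl⟩ := hFo.1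
    exact (hI.2 ⟨x, hx, hcx, rfl⟩).trans (hKF x hx)
  · obtain ⟨x, hx, hcx, rfl⟩ := hI.1
    exact (hFo.2 ⟨x, hx, hcx, rfl⟩).trans
      (Knapsack.le_two_mul_of_mem_of_mem_upperBounds hp hw hwC hC hx (hK x hx).2 (hF x hx).1)

/-- If w_i ≤ C for all i, then OPT_I ≤ OPT_F ≤ 2·OPT_I, where
OPT_I = min{K(x) : c⊤x ≤ B, x ∈ {0,1}^n} and OPT_F = min{F(x) : c⊤x ≤ B, x ∈ {0,1}^n}. -/
theorem stmt4 (n : ℕ) (hn : 0 < n) (C B : ℝ) (hC : 0 ≤ C) (hB : 0 ≤ B)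
    (p w c : Fin n → ℝ) (hp : ∀ i, 0 ≤ p i) (hw : ∀ i, 0 ≤ w i) (hc : ∀ i, 0 ≤ c i)
    (hwC : ∀ i, w i ≤ C)
    (K F : (Fin n → ℝ) → ℝ)
    (hK : ∀ x, (∀ i, x i = 0 ∨ x i = 1) →
      IsGreatest {v : ℝ | ∃ y : Fin n → ℝ,
        (∀ i, y i = 0 ∨ y i = 1) ∧ (∑ i, w i * y i ≤ C) ∧
        (∀ i, y i ≤ 1 - x i) ∧ v = ∑ i, p i * y i} (K x))
    (hF : ∀ x, (∀ i, x i = 0 ∨ x i = 1) →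
      IsGreatest {v : ℝ | ∃ y : Fin n → ℝ,
        (∀ i, 0 ≤ y i ∧ y i ≤ 1) ∧ (∑ i, w i * y i ≤ C) ∧
        (∀ i, y i ≤ 1 - x i) ∧ v = ∑ i, p i * y i} (F x))
    (OPTI OPTF : ℝ)
    (hI : IsLeast {v : ℝ | ∃ x : Fin n → ℝ,
        (∀ i, x i = 0 ∨ x i = 1) ∧ (∑ i, c i * x i ≤ B) ∧ v = K x} OPTI)
    (hFo : IsLeast {v : ℝ | ∃ x : Fin n → ℝ,
        (∀ i, x i = 0 ∨ x i = 1) ∧ (∑ i, c i * x i ≤ B) ∧ v = F x} OPTF) :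
    OPTI ≤ OPTF ∧ OPTF ≤ 2 * OPTI :=
  stmt4_general n C B hC p w c hp hw hwC K F hK hF OPTI OPTF hI hFo
end

section
/- Fix α ≥ 0, δ > 0, and let f_α(i, P̃) be defined by: f_α(i, P̃) = 0 if i > n and P̃ ≥ 0; f_α(i, P̃) = ∞ if i > n and P̃ < 0; and f_α(i, P̃) = min( c_i + f_α(i+1, P̃), f_α(i+1, δ·⌊(P̃ − max(0, p_i − α·w_i))/δ⌋) ) for i ≤ n. Then for any P̃ that is a nonnegative multiple of δ, f_α(1, P̃) ≤ B if and only if there exists x ∈ {0,1}^n with c⊤x ≤ B and F̃_α(x) ≤ P̃, where F̃_α is the incrementally-rounded sum Σ_i (1-x_i)·max(0, p_i - α·w_i). -/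
/-!
With `a i = max 0 (p i - α * w i)`, the recursion started at a multiple of `δ` only ever
evaluates `f` at multiples of `δ`, because `⌊(δ k - a) / δ⌋ = k - ⌈a / δ⌉`; likewise every
rounded partial sum of `F̃_α(x)` is a multiple of `δ`, so `F̃_α(x) = δ ∑ (1 - x i) ⌈a i / δ⌉`.
On the lattice `δ ℤ` the recursion is therefore the 0/1 knapsack recursion with integer weights
`⌈a i / δ⌉` (an item left uninterdicted uses its weight, an interdicted one costs `c i`), and
backward induction on `i` identifies `f i (δ k)` as the least cost of a choice of total weight
at most `k`.
-/

open Finset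

namespace RoundedKnapsack

lemma ceil_mul_add_div (δ : ℝ) (hδ : δ ≠ 0) (z : ℤ) (t : ℝ) :
    ⌈(δ * z + t) / δ⌉ = z + ⌈t / δ⌉ := by
  rw [add_div, mul_div_cancel_left₀ _ hδ, Int.ceil_intCast_add]

lemma floor_mul_sub_div (δ : ℝ) (hδ : δ ≠ 0) (k : ℤ) (a : ℝ) :
    ⌊(δ * k - a) / δ⌋ = k - ⌈a / δ⌉ := by
  rw [sub_div, mul_div_cancel_left₀ _ hδ, sub_eq_add_neg, ← neg_div, Int.floor_intCast_add,
    neg_div, Int.floor_neg, ← sub_eq_add_neg]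

lemma ceil_one_sub_mul_div {x : ℝ} (hx : x = 0 ∨ x = 1) (a δ : ℝ) :
    (⌈(1 - x) * a / δ⌉ : ℝ) = (1 - x) * ⌈a / δ⌉ := by
  rcases hx with rfl | rfl <;> simp

/-- The running value is always a multiple of `δ`, so rounding up after every addition is the
same as rounding up every summand separately. -/
theorem exists_roundedSum_le_iff (δ : ℝ) (hδ : δ ≠ 0) (t : ℕ → ℝ) (n : ℕ) (P : ℝ) :
    (∃ s : ℕ → ℝ, s 0 = 0 ∧ (∀ i < n, s (i + 1) = δ * ⌈(s i + t i) / δ⌉) ∧ s n ≤ P) ↔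
      δ * ∑ i ∈ range n, (⌈t i / δ⌉ : ℝ) ≤ P := by
  have step (m : ℕ) : δ * ⌈(δ * ∑ i ∈ range m, (⌈t i / δ⌉ : ℝ) + t m) / δ⌉ =
      δ * ∑ i ∈ range (m + 1), (⌈t i / δ⌉ : ℝ) := by
    rw [← Int.cast_sum, ceil_mul_add_div δ hδ, Int.cast_add, Int.cast_sum, sum_range_succ]
  constructor
  · rintro ⟨s, hs0, hrec, hsn⟩
    suffices ∀ m ≤ n, s m = δ * ∑ i ∈ range m, (⌈t i / δ⌉ : ℝ) from this n le_rfl ▸ hsn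
    intro m hm
    induction m with
    | zero => simp [hs0]
    | succ m ih => rw [hrec m hm, ih (by omega), step]
  · intro h
    exact ⟨fun m ↦ δ * ∑ i ∈ range m, (⌈t i / δ⌉ : ℝ), by simp, fun m _ ↦ (step m).symm, h⟩

lemma coe_add_le_coe_iff (a B : ℝ) (y : EReal) :
    (a : EReal) + y ≤ B ↔ y ≤ ((B - a : ℝ) : EReal) := by
  rw [EReal.coe_sub, EReal.le_sub_iff_add_le (by simp) (by simp), add_comm]

lemma sum_Ico_update (F : ℕ → ℝ → ℝ) (x : ℕ → ℝ) {i n : ℕ} (hi : i < n) (v : ℝ) :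
    ∑ j ∈ Ico i n, F j (Function.update x i v j) = F i v + ∑ j ∈ Ico (i + 1) n, F j (x j) := by
  rw [sum_eq_sum_Ico_succ_bot hi, Function.update_self]
  congr 1
  refine sum_congr rfl fun j hj ↦ ?_
  rw [Function.update_of_ne (by grind)]

lemma forall_mem_Ico_update (Q : ℕ → ℝ → Prop) (x : ℕ → ℝ) {i n : ℕ} (hi : i < n) (v : ℝ) :
    (∀ j ∈ Ico i n, Q j (Function.update x i v j)) ↔ Q i v ∧ ∀ j ∈ Ico (i + 1) n, Q j (x j) := by
  rw [← insert_Ico_add_one_left_eq_Ico hi, forall_mem_insert, Function.update_self]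
  refine and_congr_right fun _ ↦ forall₂_congr fun j hj ↦ ?_
  rw [Function.update_of_ne (by grind)]

theorem knapsack_le_iff {n : ℕ} {c : ℕ → ℝ} {d : ℕ → ℤ} {g : ℕ → ℤ → EReal}
    (hbase : ∀ i k, n ≤ i → g i k = if 0 ≤ k then 0 else ⊤)
    (hrec : ∀ i k, i < n → g i k = min ((c i : EReal) + g (i + 1) k) (g (i + 1) (k - d i)))
    {i : ℕ} (hi : i ≤ n) (B : ℝ) (k : ℤ) :
    g i k ≤ B ↔ ∃ x : ℕ → ℝ, (∀ j ∈ Ico i n, x j = 0 ∨ x j = 1) ∧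
      ∑ j ∈ Ico i n, c j * x j ≤ B ∧ ∑ j ∈ Ico i n, (1 - x j) * d j ≤ k := by
  induction hi using Nat.decreasingInduction generalizing B k with
  | self =>
    rw [hbase n k le_rfl]
    split_ifs with hk
    · simpa using fun _ : 0 ≤ B ↦ hk
    · simp [hk]
  | of_succ i hi ih =>
    rw [hrec i k hi, min_le_iff, coe_add_le_coe_iff, ih, ih]
    have cost (x : ℕ → ℝ) (v : ℝ) := sum_Ico_update (fun j y ↦ c j * y) x hi v
    have weight (x : ℕ → ℝ) (v : ℝ) := sum_Ico_update (fun j y ↦ (1 - y) * d j) x hi v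
    have binary (x : ℕ → ℝ) (v : ℝ) := forall_mem_Ico_update (fun _ y ↦ y = 0 ∨ y = 1) x hi v
    constructor
    · rintro (⟨x, hx, hc, hd⟩ | ⟨x, hx, hc, hd⟩)
      · refine ⟨Function.update x i 1, (binary x 1).2 ⟨.inr rfl, hx⟩, ?_, ?_⟩
        · rw [cost]; linarith
        · rw [weight]; linarith
      · refine ⟨Function.update x i 0, (binary x 0).2 ⟨.inl rfl, hx⟩, ?_, ?_⟩
        · rw [cost]; linarith
        · rw [weight]; push_cast at hd; linarith
    · rintro ⟨x, hx, hc, hd⟩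
      rw [← Function.update_eq_self i x, binary] at hx
      rw [← Function.update_eq_self i x, cost] at hc
      rw [← Function.update_eq_self i x, weight] at hd
      obtain ⟨hxi | hxi, hx⟩ := hx
      · refine .inr ⟨x, hx, ?_, ?_⟩
        · rw [hxi] at hc; linarith
        · rw [hxi] at hd; push_cast; linarith
      · refine .inl ⟨x, hx, ?_, ?_⟩
        · rw [hxi] at hc; linarith
        · rw [hxi] at hd; linarith

end RoundedKnapsack

open RoundedKnapsack in
theorem stmt10_general (n : ℕ) (B : ℝ)
    (c p w : ℕ → ℝ)
    (α δ : ℝ) (hδ : 0 < δ)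
    (f : ℕ → ℝ → EReal)
    (hbase : ∀ (i : ℕ) (P : ℝ), n ≤ i → f i P = if 0 ≤ P then (0 : EReal) else ⊤)
    (hrec : ∀ (i : ℕ) (P : ℝ), i < n →
      f i P = min ((c i : EReal) + f (i + 1) P)
                  (f (i + 1) (δ * ⌊(P - max 0 (p i - α * w i)) / δ⌋)))
    (Pt : ℝ) (hPt : ∃ k : ℕ, Pt = (k : ℝ) * δ) :
    f 0 Pt ≤ (B : EReal) ↔
      ∃ x : ℕ → ℝ, (∀ i < n, x i = 0 ∨ x i = 1) ∧
        (∑ i ∈ Finset.range n, c i * x i ≤ B) ∧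
        ∃ s : ℕ → ℝ, s 0 = 0 ∧
          (∀ i < n, s (i + 1) = δ * ⌈(s i + (1 - x i) * max 0 (p i - α * w i)) / δ⌉) ∧
          s n ≤ Pt := by
  obtain ⟨k, rfl⟩ := hPt
  set a : ℕ → ℝ := fun i ↦ max 0 (p i - α * w i)
  have hknapsack := knapsack_le_iff (g := fun i (k : ℤ) ↦ f i (δ * k)) (c := c)
    (d := fun i ↦ ⌈a i / δ⌉)
    (fun i k hi ↦ by simp [hbase i _ hi, mul_nonneg_iff_of_pos_left hδ])
    (fun i k hi ↦ by rw [hrec i _ hi, floor_mul_sub_div δ hδ.ne', Int.cast_sub])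
    (Nat.zero_le n) B k
  rw [show (k : ℝ) * δ = δ * ((k : ℤ) : ℝ) by push_cast; ring, hknapsack, ← range_eq_Ico]
  refine exists_congr fun x ↦ ?_
  simp only [mem_range]
  refine and_congr_right fun hx ↦ and_congr_right fun _ ↦ ?_
  rw [exists_roundedSum_le_iff δ hδ.ne' (fun i ↦ (1 - x i) * a i),
    sum_congr rfl fun j hj ↦ ceil_one_sub_mul_div (hx j (mem_range.1 hj)) (a j) δ,
    mul_le_mul_iff_of_pos_left hδ]

/-- correctness of the budget-minimizing DP over rounded profits.
Items are indexed 0,…,n-1 (so the paper's f(1,·) is f 0 here and the base case i > n is i ≥ n).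
For P̃ a nonnegative multiple of δ, f 0 P̃ ≤ B iff some feasible interdiction x
(c⊤x ≤ B) has incrementally-rounded value F̃_α(x) ≤ P̃. -/
theorem stmt10 (n : ℕ) (hn : 0 < n) (B : ℝ) (hB : 0 ≤ B)
    (c p w : ℕ → ℝ) (hc : ∀ i, 0 ≤ c i) (hp : ∀ i, 0 ≤ p i) (hw : ∀ i, 0 ≤ w i)
    (α δ : ℝ) (hα : 0 ≤ α) (hδ : 0 < δ)
    (f : ℕ → ℝ → EReal)
    (hbase : ∀ (i : ℕ) (P : ℝ), n ≤ i → f i P = if 0 ≤ P then (0 : EReal) else ⊤)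
    (hrec : ∀ (i : ℕ) (P : ℝ), i < n →
      f i P = min ((c i : EReal) + f (i + 1) P)
                  (f (i + 1) (δ * ⌊(P - max 0 (p i - α * w i)) / δ⌋)))
    (Pt : ℝ) (hPt : ∃ k : ℕ, Pt = (k : ℝ) * δ) :
    f 0 Pt ≤ (B : EReal) ↔
      ∃ x : ℕ → ℝ, (∀ i < n, x i = 0 ∨ x i = 1) ∧
        (∑ i ∈ Finset.range n, c i * x i ≤ B) ∧
        ∃ s : ℕ → ℝ, s 0 = 0 ∧
          (∀ i < n, s (i + 1) = δ * ⌈(s i + (1 - x i) * max 0 (p i - α * w i)) / δ⌉) ∧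
          s n ≤ Pt :=
  stmt10_general n B c p w α δ hδ f hbase hrec Pt hPt
end

section
/- If w_{ij} ≤ C_j for all i ∈ [n] and j ∈ [t], then for every x ∈ {0,1}^n, the fractional t-dimensional knapsack value F(x) satisfies F(x) ≤ (1+t)·K(x), where K(x) is the corresponding 0-1 optimum. -/
/-! Starting from a fractional solution `y`, as long as more than `t` coordinates are
fractional, the columns of `W` at these coordinates are linearly dependent, so `y` can be moved
along a kernel direction of `W`, without decreasing the profit, until one more coordinate hits
`0` or `1`. At the end at most `t` coordinates are fractional. Rounding them down gives a 0-1
packing, worth at most `K`, and each of them alone is a packing since `W j i ≤ C j`, worth at most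
`K` as well; hence `F ≤ K + t K`. -/

open Finset Matrix

noncomputable def exitTime (y d : ℝ) : ℝ := if 0 < d then (1 - y) / d else -y / d

lemma exitTime_pos {y d : ℝ} (hy : y ∈ Set.Ioo 0 1) (hd : d ≠ 0) : 0 < exitTime y d := by
  unfold exitTime
  split_ifs with h
  · exact div_pos (by linarith [hy.2]) h
  · exact div_pos_of_neg_of_neg (by linarith [hy.1]) (lt_of_le_of_ne (not_lt.mp h) hd)

lemma add_mul_mem_Icc_of_le_exitTime {y d s : ℝ} (hy : y ∈ Set.Icc 0 1) (hd : d ≠ 0) (hs : 0 ≤ s)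
    (hsd : s ≤ exitTime y d) : y + s * d ∈ Set.Icc 0 1 := by
  unfold exitTime at hsd
  split_ifs at hsd with h
  · have : s * d ≤ 1 - y := (le_div_iff₀ h).mp hsd
    exact ⟨by nlinarith [hy.1], by linarith⟩
  · have hneg : d < 0 := lt_of_le_of_ne (not_lt.mp h) hd
    have : -y ≤ s * d := (le_div_iff_of_neg hneg).mp hsd
    exact ⟨by linarith, by nlinarith [hy.2]⟩

lemma add_exitTime_mul_eq_zero_or_one (y : ℝ) {d : ℝ} (hd : d ≠ 0) :
    y + exitTime y d * d = 0 ∨ y + exitTime y d * d = 1 := by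
  unfold exitTime
  split_ifs
  · right; rw [div_mul_cancel₀ _ hd]; ring
  · left; rw [div_mul_cancel₀ _ hd]; ring

variable {ι κ : Type*} [Fintype ι]

noncomputable def fractionalCoords (y : ι → ℝ) : Finset ι := univ.filter fun i => y i ∈ Set.Ioo 0 1

lemma mem_fractionalCoords {y : ι → ℝ} {i : ι} : i ∈ fractionalCoords y ↔ y i ∈ Set.Ioo 0 1 := by
  simp [fractionalCoords]

lemma eq_zero_or_eq_one_of_notMem_fractionalCoords {y : ι → ℝ} (hy : y ∈ Set.Icc 0 1) {i : ι}
    (hi : i ∉ fractionalCoords y) : y i = 0 ∨ y i = 1 := by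
  by_contra! h
  exact hi (mem_fractionalCoords.mpr
    ⟨lt_of_le_of_ne (hy.1 i) (Ne.symm h.1), lt_of_le_of_ne (hy.2 i) h.2⟩)

lemma exists_add_smul_mem_Icc_fractionalCoords_ssubset {y d : ι → ℝ} (hy : y ∈ Set.Icc 0 1)
    (hd : d ≠ 0) (hsupp : ∀ i, d i ≠ 0 → i ∈ fractionalCoords y) :
    ∃ ε : ℝ, 0 < ε ∧ y + ε • d ∈ Set.Icc 0 1 ∧
      fractionalCoords (y + ε • d) ⊂ fractionalCoords y := by
  set T := univ.filter fun i => d i ≠ 0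
  have hT : T.Nonempty := by
    obtain ⟨i, hi⟩ := Function.ne_iff.mp hd
    exact ⟨i, by simpa [T] using hi⟩
  set ε := T.inf' hT fun i => exitTime (y i) (d i)
  have hε : 0 < ε := (lt_inf'_iff hT).mpr fun i hi =>
    exitTime_pos (mem_fractionalCoords.mp (hsupp i (mem_filter.mp hi).2)) (mem_filter.mp hi).2
  have hz : ∀ i, (y + ε • d) i = y i + ε * d i := fun i => rfl
  have hfix : ∀ i, d i = 0 → (y + ε • d) i = y i := fun i h => by simp [hz, h]
  have hbox : ∀ i, (y + ε • d) i ∈ Set.Icc 0 1 := fun i => by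
    by_cases hdi : d i = 0
    · rw [hfix i hdi]; exact ⟨hy.1 i, hy.2 i⟩
    · rw [hz]
      exact add_mul_mem_Icc_of_le_exitTime ⟨hy.1 i, hy.2 i⟩ hdi hε.le
        (inf'_le (fun i => exitTime (y i) (d i)) (mem_filter.mpr ⟨mem_univ i, hdi⟩))
  have hsub : fractionalCoords (y + ε • d) ⊆ fractionalCoords y := fun i hi => by
    by_cases hdi : d i = 0
    · rwa [mem_fractionalCoords, hfix i hdi, ← mem_fractionalCoords] at hi
    · exact hsupp i hdi
  refine ⟨ε, hε, ⟨fun i => (hbox i).1, fun i => (hbox i).2⟩, (ssubset_iff_of_subset hsub).mpr ?_⟩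
  -- the coordinate achieving the minimal exit time becomes integral
  obtain ⟨i₀, hi₀, hεi₀⟩ : ∃ i₀ ∈ T, ε = exitTime (y i₀) (d i₀) := exists_mem_eq_inf' hT _
  have hdi₀ : d i₀ ≠ 0 := (mem_filter.mp hi₀).2
  refine ⟨i₀, hsupp i₀ hdi₀, fun h => ?_⟩
  rw [mem_fractionalCoords, hz, hεi₀] at h
  rcases add_exitTime_mul_eq_zero_or_one (y i₀) hdi₀ with h' | h' <;> simp [h'] at h

lemma exists_ne_zero_mulVec_eq_zero_of_card_lt [Fintype κ] (W : Matrix κ ι ℝ) (S : Finset ι)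
    (hS : Fintype.card κ < #S) : ∃ d : ι → ℝ, d ≠ 0 ∧ W *ᵥ d = 0 ∧ ∀ i, d i ≠ 0 → i ∈ S := by
  let f := W.mulVecLin ∘ₗ Function.ExtendByZero.linearMap ℝ ((↑) : S → ι)
  have hker : LinearMap.ker f ≠ ⊥ := LinearMap.ker_ne_bot_of_finrank_lt (by simpa using hS)
  obtain ⟨g, hg, hg0⟩ := Submodule.exists_mem_ne_zero_of_ne_bot hker
  refine ⟨Function.extend ((↑) : S → ι) g 0, fun h => hg0 ?_, LinearMap.mem_ker.mp hg,
    fun i hi => ?_⟩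
  · funext i
    simpa [Subtype.val_injective.extend_apply] using congrFun h i
  · by_contra hiS
    exact hi (Function.extend_apply' _ _ _ fun ⟨a, ha⟩ => hiS (ha ▸ a.2))

lemma exists_fractionalCoords_ssubset [Fintype κ] (W : Matrix κ ι ℝ) (p : ι → ℝ) {y : ι → ℝ}
    (hy : y ∈ Set.Icc 0 1) (hcard : Fintype.card κ < #(fractionalCoords y)) :
    ∃ z ∈ Set.Icc 0 1, W *ᵥ z = W *ᵥ y ∧ p ⬝ᵥ y ≤ p ⬝ᵥ z ∧
      (∀ i ∉ fractionalCoords y, z i = y i) ∧ fractionalCoords z ⊂ fractionalCoords y := by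
  obtain ⟨d, hd, hWd, hsupp⟩ := exists_ne_zero_mulVec_eq_zero_of_card_lt W _ hcard
  -- replacing `d` by `-d`, moving along `d` does not decrease the profit
  wlog hpd : 0 ≤ p ⬝ᵥ d generalizing d
  · exact this (-d) (neg_ne_zero.mpr hd) (by rw [mulVec_neg, hWd, neg_zero])
      (by simpa using hsupp) (by rw [dotProduct_neg]; linarith)
  obtain ⟨ε, hε, hz, hssub⟩ := exists_add_smul_mem_Icc_fractionalCoords_ssubset hy hd hsupp
  refine ⟨y + ε • d, hz, by rw [mulVec_add, mulVec_smul, hWd, smul_zero, add_zero], ?_,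
    fun i hi => ?_, hssub⟩
  · rw [dotProduct_add, dotProduct_smul]
    exact le_add_of_nonneg_right (smul_nonneg hε.le hpd)
  · have : d i = 0 := by_contra fun h => hi (hsupp i h)
    simp [this]

lemma exists_card_fractionalCoords_le [Fintype κ] (W : Matrix κ ι ℝ) (p : ι → ℝ) {y : ι → ℝ}
    (hy : y ∈ Set.Icc 0 1) :
    ∃ z ∈ Set.Icc 0 1, W *ᵥ z = W *ᵥ y ∧ p ⬝ᵥ y ≤ p ⬝ᵥ z ∧
      (∀ i ∉ fractionalCoords y, z i = y i) ∧ #(fractionalCoords z) ≤ Fintype.card κ := by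
  induction hS : fractionalCoords y using Finset.strongInduction generalizing y with
  | _ S ih =>
    subst hS
    by_cases hcard : #(fractionalCoords y) ≤ Fintype.card κ
    · exact ⟨y, hy, rfl, le_rfl, fun _ _ => rfl, hcard⟩
    obtain ⟨z', hz', hWz', hpz', hfix', hssub⟩ :=
      exists_fractionalCoords_ssubset W p hy (not_le.mp hcard)
    obtain ⟨z, hz, hWz, hpz, hfix, hcard'⟩ := ih _ hssub hz' rfl
    exact ⟨z, hz, hWz.trans hWz', hpz'.trans hpz,
      fun i hi => (hfix i fun h => hi (hssub.subset h)).trans (hfix' i hi), hcard'⟩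

lemma dotProduct_le_dotProduct_floor_add_sum_fractionalCoords {p z : ι → ℝ} (hp : 0 ≤ p)
    (hz : z ∈ Set.Icc 0 1) :
    p ⬝ᵥ z ≤ p ⬝ᵥ (fun i => (⌊z i⌋ : ℝ)) + ∑ i ∈ fractionalCoords z, p i := by
  unfold dotProduct fractionalCoords
  rw [sum_filter, ← sum_add_distrib]
  refine sum_le_sum fun i _ => ?_
  split_ifs with hfrac
  · have : ⌊z i⌋ = 0 := Int.floor_eq_zero_iff.mpr ⟨hfrac.1.le, hfrac.2⟩
    simp only [this, Int.cast_zero, mul_zero, zero_add]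
    exact mul_le_of_le_one_right (hp i) hfrac.2.le
  · rcases eq_zero_or_eq_one_of_notMem_fractionalCoords hz (i := i)
      (by simpa [fractionalCoords] using hfrac) with h | h <;> simp [h]

lemma dotProduct_le_one_add_card_fractionalCoords_mul {W : Matrix κ ι ℝ} {C : κ → ℝ}
    {p x z : ι → ℝ} {K : ℝ} (hp : 0 ≤ p) (hW : ∀ j i, 0 ≤ W j i) (hWC : ∀ j i, W j i ≤ C j)
    (hx : ∀ i, x i = 0 ∨ x i = 1)
    (hK : ∀ r : ι → ℝ, (∀ i, r i = 0 ∨ r i = 1) → W *ᵥ r ≤ C → r ≤ 1 - x → p ⬝ᵥ r ≤ K)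
    (hz : z ∈ Set.Icc 0 1) (hWz : W *ᵥ z ≤ C) (hzx : z ≤ 1 - x) :
    p ⬝ᵥ z ≤ (1 + #(fractionalCoords z)) * K := by
  classical
  set r : ι → ℝ := fun i => (⌊z i⌋ : ℝ)
  have hr01 (i : ι) : r i = 0 ∨ r i = 1 := by
    rcases (hz.2 i).eq_or_lt with h | h
    · simp [r, h]
    · simp [r, Int.floor_eq_zero_iff.mpr ⟨hz.1 i, h⟩]
  have hrz : r ≤ z := fun i => Int.floor_le (z i)
  have hr : p ⬝ᵥ r ≤ K := hK r hr01
    (fun j => (dotProduct_le_dotProduct_of_nonneg_left hrz (hW j)).trans (hWz j)) (hrz.trans hzx)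
  have hsingle (i : ι) (hi : i ∈ fractionalCoords z) : p i ≤ K := by
    have hxi : x i = 0 := (hx i).resolve_right fun h => by
      linarith [hzx i, (mem_fractionalCoords.mp hi).1, show (1 - x) i = 1 - x i from rfl]
    refine (dotProduct_single_one p i).symm.trans_le (hK _ (fun k => ?_) (fun j => ?_) fun k => ?_)
    · by_cases h : k = i <;> simp [h]
    · exact (congrFun (mulVec_single_one W i) j).trans_le (hWC j i)
    · by_cases h : k = i
      · simp [h, hxi]
      · rcases hx k with hk | hk <;> simp [h, hk]
  calc p ⬝ᵥ z ≤ p ⬝ᵥ r + ∑ i ∈ fractionalCoords z, p i :=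
        dotProduct_le_dotProduct_floor_add_sum_fractionalCoords hp hz
    _ ≤ K + #(fractionalCoords z) * K :=
        add_le_add hr (by simpa using sum_le_card_nsmul _ _ _ hsingle)
    _ = (1 + #(fractionalCoords z)) * K := by ring

theorem stmt11_general (n t : ℕ)
    (C : Fin t → ℝ) (hC : ∀ j, 0 ≤ C j)
    (p : Fin n → ℝ) (hp : ∀ i, 0 ≤ p i)
    (W : Fin t → Fin n → ℝ) (hW : ∀ j i, 0 ≤ W j i) (hWC : ∀ j i, W j i ≤ C j)
    (x : Fin n → ℝ) (hx : ∀ i, x i = 0 ∨ x i = 1)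
    (K F : ℝ)
    (hK : IsGreatest {v : ℝ | ∃ y : Fin n → ℝ,
        (∀ i, y i = 0 ∨ y i = 1) ∧ (∀ j, ∑ i, W j i * y i ≤ C j) ∧
        (∀ i, y i ≤ 1 - x i) ∧ v = ∑ i, p i * y i} K)
    (hF : IsGreatest {v : ℝ | ∃ y : Fin n → ℝ,
        (∀ i, 0 ≤ y i ∧ y i ≤ 1) ∧ (∀ j, ∑ i, W j i * y i ≤ C j) ∧
        (∀ i, y i ≤ 1 - x i) ∧ v = ∑ i, p i * y i} F) :
    F ≤ (1 + t) * K := by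
  obtain ⟨⟨y, hy, hWy, hyx, rfl⟩, -⟩ := hF
  obtain ⟨z, hz, hWz, hpz, hzy, hcard⟩ := exists_card_fractionalCoords_le
    (W : Matrix (Fin t) (Fin n) ℝ) p (y := y) ⟨fun i => (hy i).1, fun i => (hy i).2⟩
  -- an interdicted item has `y i = 0`, which the reduction leaves untouched
  have hzx : z ≤ 1 - x := fun i => by
    rcases hx i with h | h
    · simpa [h] using hz.2 i
    · have hyi : y i = 0 := le_antisymm (by simpa [h] using hyx i) (hy i).1
      simp [hzy i (by simp [mem_fractionalCoords, hyi]), hyi, h]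
  have hK_ub (r : Fin n → ℝ) (hr : ∀ i, r i = 0 ∨ r i = 1)
      (hWr : (W : Matrix (Fin t) (Fin n) ℝ) *ᵥ r ≤ C) (hrx : r ≤ 1 - x) : p ⬝ᵥ r ≤ K :=
    hK.2 ⟨r, hr, hWr, hrx, rfl⟩
  have hK0 : 0 ≤ K := by
    simpa using hK_ub 0 (fun _ => Or.inl rfl)
      ((mulVec_zero (W : Matrix (Fin t) (Fin n) ℝ)).trans_le hC)
      fun i => by rcases hx i with h | h <;> simp [h]
  calc ∑ i, p i * y i ≤ p ⬝ᵥ z := hpz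
    _ ≤ (1 + #(fractionalCoords z)) * K :=
      dotProduct_le_one_add_card_fractionalCoords_mul hp hW hWC hx hK_ub hz (hWz ▸ hWy) hzx
    _ ≤ (1 + t) * K := by
      gcongr
      simpa using hcard

/-- In t-dimensional knapsack with W_{ji} ≤ C_j for all entries,
F(x) ≤ (1+t)·K(x) for every interdiction x ∈ {0,1}^n. -/
theorem stmt11 (n t : ℕ) (hn : 0 < n) (ht : 0 < t)
    (C : Fin t → ℝ) (hC : ∀ j, 0 ≤ C j)
    (p : Fin n → ℝ) (hp : ∀ i, 0 ≤ p i)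
    (W : Fin t → Fin n → ℝ) (hW : ∀ j i, 0 ≤ W j i) (hWC : ∀ j i, W j i ≤ C j)
    (x : Fin n → ℝ) (hx : ∀ i, x i = 0 ∨ x i = 1)
    (K F : ℝ)
    (hK : IsGreatest {v : ℝ | ∃ y : Fin n → ℝ,
        (∀ i, y i = 0 ∨ y i = 1) ∧ (∀ j, ∑ i, W j i * y i ≤ C j) ∧
        (∀ i, y i ≤ 1 - x i) ∧ v = ∑ i, p i * y i} K)
    (hF : IsGreatest {v : ℝ | ∃ y : Fin n → ℝ,
        (∀ i, 0 ≤ y i ∧ y i ≤ 1) ∧ (∀ j, ∑ i, W j i * y i ≤ C j) ∧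
        (∀ i, y i ≤ 1 - x i) ∧ v = ∑ i, p i * y i} F) :
    F ≤ (1 + t) * K :=
  stmt11_general n t C hC p hp W hW hWC x hx K F hK hF
end

section
/- If an algorithm outputs x̃ ∈ {0,1}^n with c⊤x̃ ≤ B and F(x̃) ≤ (1+ε/2)·OPT_F, and w_i ≤ C for all i, then there exists an optimal packing y for K(x̃) such that K(x̃) ≤ (2+ε)·OPT_I; i.e., x̃ is a (2+ε)-approximate interdiction set. -/
/-!
Every fractional packing `y` can be improved, without enlarging its support, to one with at most
one fractional coordinate: while two coordinates are fractional, shift weight from the one with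
the worse profit-to-weight ratio to the other until one of them becomes integral. A packing whose
only fractional coordinate is `j` is dominated by two integral packings, itself with `j` dropped
and `{j}` alone (which fits since `w j ≤ C`). So `F ≤ 2 K` pointwise, whence for an optimal
interdiction `x*` we get `OPT_F ≤ F x* ≤ 2 K x* = 2 OPT_I`, and
`K x̃ ≤ F x̃ ≤ (1 + ε / 2) OPT_F ≤ (2 + ε) OPT_I`.
-/

open Finset Function

section Knapsack

variable {ι 𝕜 : Type*} [Fintype ι]

def IsPacking [Semiring 𝕜] [Preorder 𝕜] (w : ι → 𝕜) (C : 𝕜) (y : ι → 𝕜) : Prop :=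
  (∀ i, y i = 0 ∨ y i = 1) ∧ ∑ i, w i * y i ≤ C

def IsFractionalPacking [Semiring 𝕜] [Preorder 𝕜] (w : ι → 𝕜) (C : 𝕜) (y : ι → 𝕜) : Prop :=
  (∀ i, 0 ≤ y i ∧ y i ≤ 1) ∧ ∑ i, w i * y i ≤ C

def fractionalSupport [Zero 𝕜] [One 𝕜] [DecidableEq 𝕜] (y : ι → 𝕜) : Finset ι :=
  {i | y i ≠ 0 ∧ y i ≠ 1}

section fractionalSupport

variable [Zero 𝕜] [One 𝕜] [DecidableEq 𝕜] {y : ι → 𝕜} {i : ι}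

theorem mem_fractionalSupport : i ∈ fractionalSupport y ↔ y i ≠ 0 ∧ y i ≠ 1 := by
  simp [fractionalSupport]

theorem notMem_fractionalSupport : i ∉ fractionalSupport y ↔ y i = 0 ∨ y i = 1 := by
  rw [mem_fractionalSupport]; tauto

theorem fractionalSupport_update_subset [DecidableEq ι] (y : ι → 𝕜) (j : ι) (v : 𝕜) :
    fractionalSupport (update y j v) ⊆ insert j (fractionalSupport y) := by
  intro i hi
  rcases eq_or_ne i j with rfl | hij
  · exact mem_insert_self i _
  · rw [mem_fractionalSupport, update_of_ne hij] at hi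
    exact mem_insert_of_mem (mem_fractionalSupport.2 hi)

end fractionalSupport

theorem Finset.sum_mul_update [DecidableEq ι] [CommRing 𝕜] (p f : ι → 𝕜) (j : ι) (b : 𝕜) :
    ∑ i, p i * update f j b i = ∑ i, p i * f i + p j * (b - f j) := by
  have h : (fun i => p i * update f j b i) = update (fun i => p i * f i) j (p j * b) := by
    ext i; rcases eq_or_ne i j with rfl | h <;> simp [*]
  rw [h, sum_update_of_mem (mem_univ j), ← add_sum_erase _ _ (mem_univ j),
    sdiff_singleton_eq_erase]
  ring

variable [Field 𝕜] [LinearOrder 𝕜] [IsStrictOrderedRing 𝕜]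

theorem exists_exchange_of_ratio_le {pa pb wa wb ya yb : 𝕜} (hpa : 0 ≤ pa) (hwa : 0 ≤ wa)
    (hwb : 0 ≤ wb) (hya : ya ≤ 1) (hyb : 0 ≤ yb) (hratio : pb * wa ≤ pa * wb) :
    ∃ ya' yb', ya ≤ ya' ∧ ya' ≤ 1 ∧ 0 ≤ yb' ∧ yb' ≤ yb ∧
      wa * ya' + wb * yb' ≤ wa * ya + wb * yb ∧
      pa * ya + pb * yb ≤ pa * ya' + pb * yb' ∧ (ya' = 1 ∨ yb' = 0) := by
  rcases le_or_gt ((1 - ya) * wa) (yb * wb) with h | h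
  · rcases hwb.eq_or_lt with rfl | hwb
    · refine ⟨1, yb, hya, le_rfl, hyb, le_rfl, ?_, ?_, Or.inl rfl⟩ <;> nlinarith
    · have hdiv : (1 - ya) * wa / wb * wb = (1 - ya) * wa := div_mul_cancel₀ _ hwb.ne'
      have hdiv0 : 0 ≤ (1 - ya) * wa / wb := by have := sub_nonneg.2 hya; positivity
      refine ⟨1, yb - (1 - ya) * wa / wb, hya, le_rfl, ?_, by linarith, ?_, ?_, Or.inl rfl⟩
      · rwa [sub_nonneg, div_le_iff₀ hwb]
      · linarith
      · have : pb * ((1 - ya) * wa / wb) ≤ pa * (1 - ya) := by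
          refine le_of_mul_le_mul_right ?_ hwb
          rw [mul_assoc, hdiv]
          nlinarith
        linarith
  · have hwa : 0 < wa := by nlinarith
    have hdiv : yb * wb / wa * wa = yb * wb := div_mul_cancel₀ _ hwa.ne'
    have hdiv0 : 0 ≤ yb * wb / wa := by positivity
    refine ⟨ya + yb * wb / wa, 0, by linarith, ?_, le_rfl, hyb, by linarith, ?_, Or.inr rfl⟩
    · rw [← le_sub_iff_add_le', div_le_iff₀ hwa]; linarith
    · have : pb * yb ≤ pa * (yb * wb / wa) := by
        refine le_of_mul_le_mul_right ?_ hwa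
        rw [mul_assoc pa, hdiv]
        nlinarith
      linarith

variable {p w : ι → 𝕜} {C : 𝕜}

theorem exists_fractionalSupport_ssubset_of_ratio_le (hp : ∀ i, 0 ≤ p i) (hw : ∀ i, 0 ≤ w i)
    {y : ι → 𝕜} (hy : IsFractionalPacking w C y) {a b : ι} (hab : a ≠ b)
    (ha : a ∈ fractionalSupport y) (hb : b ∈ fractionalSupport y)
    (hratio : p b * w a ≤ p a * w b) :
    ∃ y', IsFractionalPacking w C y' ∧ support y' ⊆ support y ∧
      ∑ i, p i * y i ≤ ∑ i, p i * y' i ∧ fractionalSupport y' ⊂ fractionalSupport y := by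
  classical
  obtain ⟨ya, yb, hya, hya1, hyb0, hyb, hweight, hvalue, hdrop⟩ :=
    exists_exchange_of_ratio_le (hp a) (hw a) (hw b) (hy.1 a).2 (hy.1 b).1 hratio
  set y' := update (update y a ya) b yb
  have hy'a : y' a = ya := by simp [y', update_of_ne hab]
  have hy'b : y' b = yb := by simp [y']
  have hy'_of_ne : ∀ i, i ≠ a → i ≠ b → y' i = y i := fun i hia hib => by
    simp [y', update_of_ne hia, update_of_ne hib]
  have hsum : ∀ q : ι → 𝕜, ∑ i, q i * y' i = ∑ i, q i * y i + (q a * ya + q b * yb)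
      - (q a * y a + q b * y b) := fun q => by
    simp only [y', sum_mul_update, update_of_ne hab.symm]; ring
  have hsupp : ∀ {i}, i ∈ fractionalSupport y → y i ≠ 0 := fun hi => (mem_fractionalSupport.1 hi).1
  refine ⟨y', ⟨fun i => ?_, ?_⟩, fun i hi => ?_, ?_, ?_⟩
  · rcases eq_or_ne i a with rfl | hia
    · rw [hy'a]; exact ⟨(hy.1 i).1.trans hya, hya1⟩
    rcases eq_or_ne i b with rfl | hib
    · rw [hy'b]; exact ⟨hyb0, hyb.trans (hy.1 i).2⟩
    rw [hy'_of_ne i hia hib]; exact hy.1 i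
  · rw [hsum w]; linarith [hy.2]
  · rcases eq_or_ne i a with rfl | hia
    · exact hsupp ha
    rcases eq_or_ne i b with rfl | hib
    · exact hsupp hb
    rwa [mem_support, ← hy'_of_ne i hia hib]
  · rw [hsum p]; linarith
  · have hsub : fractionalSupport y' ⊆ fractionalSupport y := by
      refine (fractionalSupport_update_subset _ _ _).trans ?_
      rw [insert_subset_iff]
      exact ⟨hb, (fractionalSupport_update_subset _ _ _).trans (insert_subset ha subset_rfl)⟩
    rw [ssubset_iff_of_subset hsub]
    rcases hdrop with h | h
    · exact ⟨a, ha, notMem_fractionalSupport.2 (Or.inr (hy'a.trans h))⟩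
    · exact ⟨b, hb, notMem_fractionalSupport.2 (Or.inl (hy'b.trans h))⟩

theorem exists_fractionalSupport_ssubset_of_one_lt_card (hp : ∀ i, 0 ≤ p i)
    (hw : ∀ i, 0 ≤ w i) {y : ι → 𝕜} (hy : IsFractionalPacking w C y)
    (h : 1 < #(fractionalSupport y)) :
    ∃ y', IsFractionalPacking w C y' ∧ support y' ⊆ support y ∧
      ∑ i, p i * y i ≤ ∑ i, p i * y' i ∧ fractionalSupport y' ⊂ fractionalSupport y := by
  obtain ⟨a, ha, b, hb, hab⟩ := one_lt_card.1 h
  rcases le_total (p b * w a) (p a * w b) with hr | hr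
  · exact exists_fractionalSupport_ssubset_of_ratio_le hp hw hy hab ha hb hr
  · exact exists_fractionalSupport_ssubset_of_ratio_le hp hw hy hab.symm hb ha hr

theorem exists_card_fractionalSupport_le_one (hp : ∀ i, 0 ≤ p i) (hw : ∀ i, 0 ≤ w i)
    {y : ι → 𝕜} (hy : IsFractionalPacking w C y) :
    ∃ y', IsFractionalPacking w C y' ∧ support y' ⊆ support y ∧
      ∑ i, p i * y i ≤ ∑ i, p i * y' i ∧ #(fractionalSupport y') ≤ 1 := by
  induction hk : #(fractionalSupport y) using Nat.strong_induction_on generalizing y with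
  | _ k ih =>
  rcases le_or_gt k 1 with hk1 | hk1
  · exact ⟨y, hy, subset_rfl, le_rfl, hk ▸ hk1⟩
  obtain ⟨y', hy', hsupp, hval, hss⟩ :=
    exists_fractionalSupport_ssubset_of_one_lt_card hp hw hy (hk ▸ hk1)
  obtain ⟨z, hz, hzs, hzv, hz1⟩ := ih _ (hk ▸ card_lt_card hss) hy' rfl
  exact ⟨z, hz, hzs.trans hsupp, hval.trans hzv, hz1⟩

theorem exists_packings_of_card_fractionalSupport_le_one (hp : ∀ i, 0 ≤ p i)
    (hw : ∀ i, 0 ≤ w i) (hwC : ∀ i, w i ≤ C) (hC : 0 ≤ C) {y : ι → 𝕜}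
    (hy : IsFractionalPacking w C y) (h1 : #(fractionalSupport y) ≤ 1) :
    ∃ z e, IsPacking w C z ∧ IsPacking w C e ∧ support z ⊆ support y ∧
      support e ⊆ support y ∧ ∑ i, p i * y i ≤ ∑ i, p i * z i + ∑ i, p i * e i := by
  classical
  rcases (fractionalSupport y).eq_empty_or_nonempty with h0 | ⟨j, hj⟩
  · refine ⟨y, 0, ⟨fun i => notMem_fractionalSupport.1 (h0 ▸ notMem_empty i), hy.2⟩,
      ⟨fun _ => Or.inl rfl, by simpa⟩, subset_rfl, by simp, by simp⟩
  have hint : ∀ i, i ≠ j → y i = 0 ∨ y i = 1 := fun i hij =>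
    notMem_fractionalSupport.1 fun hi => hij (card_le_one.1 h1 _ hi _ hj)
  have hyj := mem_fractionalSupport.1 hj
  refine ⟨update y j 0, Pi.single j 1, ⟨fun i => ?_, ?_⟩, ⟨fun i => ?_, ?_⟩, ?_, ?_, ?_⟩
  · rcases eq_or_ne i j with rfl | hij
    · simp
    · rw [update_of_ne hij]; exact hint i hij
  · rw [sum_mul_update]; nlinarith [hy.2, hw j, (hy.1 j).1]
  · rcases eq_or_ne i j with rfl | hij <;> simp [*]
  · simpa [Pi.single_apply] using hwC j
  · rw [support_update_zero]; exact Set.sdiff_subset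
  · exact Pi.support_single_subset.trans (Set.singleton_subset_iff.2 hyj.1)
  · rw [sum_mul_update]; simp [Pi.single_apply]; nlinarith [hp j, (hy.1 j).2]

theorem exists_packings_sum_le_add (hp : ∀ i, 0 ≤ p i) (hw : ∀ i, 0 ≤ w i)
    (hwC : ∀ i, w i ≤ C) (hC : 0 ≤ C) {y : ι → 𝕜} (hy : IsFractionalPacking w C y) :
    ∃ z e, IsPacking w C z ∧ IsPacking w C e ∧ support z ⊆ support y ∧
      support e ⊆ support y ∧ ∑ i, p i * y i ≤ ∑ i, p i * z i + ∑ i, p i * e i := by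
  obtain ⟨y', hy', hsupp, hval, h1⟩ := exists_card_fractionalSupport_le_one hp hw hy
  obtain ⟨z, e, hz, he, hzs, hes, hze⟩ :=
    exists_packings_of_card_fractionalSupport_le_one hp hw hwC hC hy' h1
  exact ⟨z, e, hz, he, hzs.trans hsupp, hes.trans hsupp, hval.trans hze⟩

theorem sum_le_two_mul_of_forall_packing_le (hp : ∀ i, 0 ≤ p i) (hw : ∀ i, 0 ≤ w i)
    (hwC : ∀ i, w i ≤ C) (hC : 0 ≤ C) {x : ι → 𝕜} (hx : ∀ i, x i = 0 ∨ x i = 1) {V : 𝕜}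
    (hV : ∀ z, IsPacking w C z → (∀ i, z i ≤ 1 - x i) → ∑ i, p i * z i ≤ V)
    {y : ι → 𝕜} (hy : IsFractionalPacking w C y) (hyx : ∀ i, y i ≤ 1 - x i) :
    ∑ i, p i * y i ≤ 2 * V := by
  have hle : ∀ z, IsPacking w C z → support z ⊆ support y → ∀ i, z i ≤ 1 - x i := by
    intro z hz hzy i
    rcases hx i with hxi | hxi
    · rcases hz.1 i with hzi | hzi <;> simp [hzi, hxi]
    · have hyi : y i = 0 := le_antisymm (by simpa [hxi] using hyx i) (hy.1 i).1
      simp [hxi, notMem_support.1 fun hi => hzy hi hyi]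
  obtain ⟨z, e, hz, he, hzs, hes, hze⟩ := exists_packings_sum_le_add hp hw hwC hC hy
  linarith [hV z hz (hle z hz hzs), hV e he (hle e he hes)]

end Knapsack

theorem stmt15_general (n : ℕ) (C B : ℝ) (hC : 0 ≤ C)
    (p w c : Fin n → ℝ) (hp : ∀ i, 0 ≤ p i) (hw : ∀ i, 0 ≤ w i)
    (hwC : ∀ i, w i ≤ C) (ε : ℝ) (hε : 0 < ε)
    (K F : (Fin n → ℝ) → ℝ)
    (hK : ∀ x, (∀ i, x i = 0 ∨ x i = 1) →
      IsGreatest {v : ℝ | ∃ y : Fin n → ℝ,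
        (∀ i, y i = 0 ∨ y i = 1) ∧ (∑ i, w i * y i ≤ C) ∧
        (∀ i, y i ≤ 1 - x i) ∧ v = ∑ i, p i * y i} (K x))
    (hF : ∀ x, (∀ i, x i = 0 ∨ x i = 1) →
      IsGreatest {v : ℝ | ∃ y : Fin n → ℝ,
        (∀ i, 0 ≤ y i ∧ y i ≤ 1) ∧ (∑ i, w i * y i ≤ C) ∧
        (∀ i, y i ≤ 1 - x i) ∧ v = ∑ i, p i * y i} (F x))
    (OPTI OPTF : ℝ)
    (hI : IsLeast {v : ℝ | ∃ x : Fin n → ℝ,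
        (∀ i, x i = 0 ∨ x i = 1) ∧ (∑ i, c i * x i ≤ B) ∧ v = K x} OPTI)
    (hFo : IsLeast {v : ℝ | ∃ x : Fin n → ℝ,
        (∀ i, x i = 0 ∨ x i = 1) ∧ (∑ i, c i * x i ≤ B) ∧ v = F x} OPTF)
    (xt : Fin n → ℝ) (hxt : ∀ i, xt i = 0 ∨ xt i = 1)
    (happrox : F xt ≤ (1 + ε / 2) * OPTF) :
    (∃ y : Fin n → ℝ,
      (∀ i, y i = 0 ∨ y i = 1) ∧ (∑ i, w i * y i ≤ C) ∧ (∀ i, y i ≤ 1 - xt i) ∧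
      ∑ i, p i * y i = K xt) ∧
    K xt ≤ (2 + ε) * OPTI := by
  obtain ⟨y, hy01, hyC, hyxt, hyK⟩ := (hK xt hxt).1
  refine ⟨⟨y, hy01, hyC, hyxt, hyK.symm⟩, ?_⟩
  have hKF : K xt ≤ F xt := (hF xt hxt).2
    ⟨y, fun i => by rcases hy01 i with h | h <;> simp [h], hyC, hyxt, hyK⟩
  obtain ⟨x, hx01, hxB, rfl⟩ := hI.1
  obtain ⟨yF, hyF01, hyFC, hyFx, hyF⟩ := (hF x hx01).1
  have hF2K : F x ≤ 2 * K x := hyF ▸ sum_le_two_mul_of_forall_packing_le hp hw hwC hC hx01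
    (fun z hz hzx => (hK x hx01).2 ⟨z, hz.1, hz.2, hzx, rfl⟩) ⟨hyF01, hyFC⟩ hyFx
  have hOPTF : OPTF ≤ F x := hFo.2 ⟨x, hx01, hxB, rfl⟩
  calc K xt ≤ (1 + ε / 2) * OPTF := hKF.trans happrox
    _ ≤ (1 + ε / 2) * (2 * K x) := by gcongr; linarith
    _ = (2 + ε) * K x := by ring

/-- if x̃ is feasible (c⊤x̃ ≤ B) with F(x̃) ≤ (1+ε/2)·OPT_F and w_i ≤ C for all i,
then there is an optimal packing y for K(x̃), and K(x̃) ≤ (2+ε)·OPT_I. -/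
theorem stmt15 (n : ℕ) (hn : 0 < n) (C B : ℝ) (hC : 0 ≤ C) (hB : 0 ≤ B)
    (p w c : Fin n → ℝ) (hp : ∀ i, 0 ≤ p i) (hw : ∀ i, 0 ≤ w i) (hc : ∀ i, 0 ≤ c i)
    (hwC : ∀ i, w i ≤ C) (ε : ℝ) (hε : 0 < ε)
    (K F : (Fin n → ℝ) → ℝ)
    (hK : ∀ x, (∀ i, x i = 0 ∨ x i = 1) →
      IsGreatest {v : ℝ | ∃ y : Fin n → ℝ,
        (∀ i, y i = 0 ∨ y i = 1) ∧ (∑ i, w i * y i ≤ C) ∧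
        (∀ i, y i ≤ 1 - x i) ∧ v = ∑ i, p i * y i} (K x))
    (hF : ∀ x, (∀ i, x i = 0 ∨ x i = 1) →
      IsGreatest {v : ℝ | ∃ y : Fin n → ℝ,
        (∀ i, 0 ≤ y i ∧ y i ≤ 1) ∧ (∑ i, w i * y i ≤ C) ∧
        (∀ i, y i ≤ 1 - x i) ∧ v = ∑ i, p i * y i} (F x))
    (OPTI OPTF : ℝ)
    (hI : IsLeast {v : ℝ | ∃ x : Fin n → ℝ,
        (∀ i, x i = 0 ∨ x i = 1) ∧ (∑ i, c i * x i ≤ B) ∧ v = K x} OPTI)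
    (hFo : IsLeast {v : ℝ | ∃ x : Fin n → ℝ,
        (∀ i, x i = 0 ∨ x i = 1) ∧ (∑ i, c i * x i ≤ B) ∧ v = F x} OPTF)
    (xt : Fin n → ℝ) (hxt : ∀ i, xt i = 0 ∨ xt i = 1)
    (hfeas : ∑ i, c i * xt i ≤ B)
    (happrox : F xt ≤ (1 + ε / 2) * OPTF) :
    (∃ y : Fin n → ℝ,
      (∀ i, y i = 0 ∨ y i = 1) ∧ (∑ i, w i * y i ≤ C) ∧ (∀ i, y i ≤ 1 - xt i) ∧
      ∑ i, p i * y i = K xt) ∧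
    K xt ≤ (2 + ε) * OPTI :=
  stmt15_general n C B hC p w c hp hw hwC ε hε K F hK hF OPTI OPTF hI hFo xt hxt happrox
end
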